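/- arXiv:2103.14237 — 2 statements merged into one kernel-verified Lean document; each statement's English description precedes it below -/
import Mathlib

section
/- Let S and X be m×m real matrices and k a natural number such that X satisfies the core-EP equations for S with exponent k (i.e., X·S^(k+1) = S^k, S·X·X = X, and (S·X)ᵀ = S·X). If a vector Y ∈ ℝ^m lies in the range of S^k, i.e., Y = S^k *ᵥ T for some vector T ∈ ℝ^m, then S *ᵥ (X *ᵥ Y) = Y; that is, X *ᵥ Y is a solution of the linear system S·x = Y. -/
open Matrix

/-- `X` satisfies the core-EP equations for `S` with exponent `k`:
`X·S^(k+1) = S^k`, `S·X·X = X`, and `(S·X)ᵀ = S·X`. -/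
def CoreEPEqs {m : ℕ} (S X : Matrix (Fin m) (Fin m) ℝ) (k : ℕ) : Prop :=
  X * S ^ (k + 1) = S ^ k ∧ S * X * X = X ∧ (S * X)ᵀ = S * X

theorem coreEP_solves_of_mem_range {m : ℕ} (S X : Matrix (Fin m) (Fin m) ℝ) (k : ℕ)
    (hX : CoreEPEqs S X k) (Y T : Fin m → ℝ) (hY : Y = (S ^ k).mulVec T) :
    S.mulVec (X.mulVec Y) = Y := by
  obtain ⟨h1, h2, _⟩ := hX
  have key : S * X * S ^ k = S ^ k := by
    calc S * X * S ^ k = S * X * (X * S ^ (k + 1)) := by rw [h1]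
    _ = (S * X * X) * S ^ (k + 1) := by simp [Matrix.mul_assoc]
    _ = S ^ k := by rw [h2, h1]
  subst hY
  rw [mulVec_mulVec, mulVec_mulVec, key]
end

section
/- Let S and X be m×m real matrices and k a natural number such that X satisfies the core-EP equations for S with exponent k (i.e., X·S^(k+1) = S^k, S·X·X = X, and (S·X)ᵀ = S·X), and let G be an m×m real matrix that is a {1,3}-inverse of S^k (i.e., S^k·G·S^k = S^k and (S^k·G)ᵀ = S^k·G). Then X·S^k·G = X; consequently, for every vector Y ∈ ℝ^m, setting Y' = S^k *ᵥ (G *ᵥ Y), one has X *ᵥ Y' = X *ᵥ Y and S *ᵥ (X *ᵥ Y) = Y', i.e., X *ᵥ Y is a solution of the (consistent) linear system S·x = S^k·G *ᵥ Y. -/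
open Matrix

/-- `G` is a {1,3}-inverse of `M`: `M·G·M = M` and `(M·G)ᵀ = M·G`. -/
def OneThreeInverse {m : ℕ} (M G : Matrix (Fin m) (Fin m) ℝ) : Prop :=
  M * G * M = M ∧ (M * G)ᵀ = M * G

theorem coreEP_solves_modified_system {m : ℕ} (S X G : Matrix (Fin m) (Fin m) ℝ) (k : ℕ)
    (hX : CoreEPEqs S X k) (hG : OneThreeInverse (S ^ k) G) :
    X * S ^ k * G = X ∧
      ∀ Y : Fin m → ℝ,
        X.mulVec ((S ^ k).mulVec (G.mulVec Y)) = X.mulVec Y ∧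
          S.mulVec (X.mulVec Y) = (S ^ k).mulVec (G.mulVec Y) := by
  obtain ⟨h1, h2, h3⟩ := hX
  obtain ⟨g1, g2⟩ := hG
  -- Step A : S^j * X^(j+1) = X
  have hA : ∀ j : ℕ, S ^ j * X ^ (j + 1) = X := by
    intro j
    induction j with
    | zero => simp
    | succ n ih =>
      calc S ^ (n + 1) * X ^ (n + 2)
          = S * (S ^ n * X ^ (n + 1)) * X := by
            rw [pow_succ' S n, pow_succ X (n + 1)]; noncomm_ring
        _ = S * X * X := by rw [ih]
        _ = X := h2
  -- Step B : X * S * X = X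
  have hXSX : X * S * X = X := by
    calc X * S * X = X * S * (S ^ k * X ^ (k + 1)) := by rw [hA k]
      _ = X * S ^ (k + 1) * X ^ (k + 1) := by
            rw [pow_succ' S k]; noncomm_ring
      _ = S ^ k * X ^ (k + 1) := by rw [h1]
      _ = X := hA k
  -- S*X factors through S^k on the left
  have hP : S * X = S ^ k * (S * X ^ (k + 1)) := by
    calc S * X = S * (S ^ k * X ^ (k + 1)) := by rw [hA k]
      _ = S ^ k * (S * X ^ (k + 1)) := by
          rw [← mul_assoc, ← mul_assoc, (Commute.refl S).pow_right k |>.eq]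
  -- (S*X) * S^k = S^k
  have hPS : S * X * S ^ k = S ^ k := by
    calc S * X * S ^ k = S * X * (X * S ^ (k + 1)) := by rw [h1]
      _ = S * X * X * S ^ (k + 1) := by noncomm_ring
      _ = X * S ^ (k + 1) := by rw [h2]
      _ = S ^ k := h1
  have hPQ : (S * X) * (S ^ k * G) = S ^ k * G := by
    rw [← mul_assoc, hPS]
  have hQP : (S ^ k * G) * (S * X) = S * X := by
    conv_lhs => rw [hP]
    conv_rhs => rw [hP]
    calc S ^ k * G * (S ^ k * (S * X ^ (k + 1)))
        = (S ^ k * G * S ^ k) * (S * X ^ (k + 1)) := by noncomm_ring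
      _ = S ^ k * (S * X ^ (k + 1)) := by rw [g1]
  have hPQeq : S * X = S ^ k * G := by
    calc S * X = (S * X)ᵀ := h3.symm
      _ = ((S ^ k * G) * (S * X))ᵀ := by rw [hQP]
      _ = (S * X)ᵀ * (S ^ k * G)ᵀ := by rw [Matrix.transpose_mul]
      _ = (S * X) * (S ^ k * G) := by rw [h3, g2]
      _ = S ^ k * G := hPQ
  have key : X * S ^ k * G = X := by
    calc X * S ^ k * G = X * (S ^ k * G) := by rw [mul_assoc]
      _ = X * (S * X) := by rw [hPQeq]
      _ = X := by rw [← mul_assoc]; exact hXSX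
  refine ⟨key, fun Y => ⟨?_, ?_⟩⟩
  · rw [Matrix.mulVec_mulVec, Matrix.mulVec_mulVec, key]
  · rw [Matrix.mulVec_mulVec, Matrix.mulVec_mulVec, hPQeq]
end
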